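/- arXiv:2108.12644 — 5 statements merged into one kernel-verified Lean document; each statement's English description precedes it below -/
import Mathlib

section
/- Let A be a finite nonempty set, n ≥ 1, r ≥ 1, and let u_1, …, u_n, ũ_1, …, ũ_r : A → ℝ. Let (v̄_t)_{t∈ℕ} be a sequence of probability vectors on A such that for each j, lim_{t→∞} ⟨ũ_j, v̄_t⟩ = 0, and for each i the limit ū_i = lim_{t→∞} ⟨u_i, v̄_t⟩ exists. Suppose there exist real numbers α_1, …, α_n, γ, y_1, …, y_r with α_1 u_1 + ⋯ + α_n u_n + γ·𝟙 = y_1 ũ_1 + ⋯ + y_r ũ_r and α_1 u_1 + ⋯ + α_n u_n + γ·𝟙 ≠ 0. Then (α_1, …, α_n, γ) ≠ (0, …, 0) and α_1 ū_1 + ⋯ + α_n ū_n + γ = 0. (Sufficiency direction of the paper's Theorem 2: a nonzero vector common to the span of payoff vectors and the ruling space enforces a nontrivial linear payoff relation.) -/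
open Filter Finset Topology

/-- Sufficiency direction of the paper's Theorem 2: a nonzero vector common to the
span of payoff vectors and the ruling space enforces a nontrivial linear payoff
relation. -/
theorem stmt1 {A : Type*} [Fintype A] [Nonempty A]
    {n r : ℕ} (hn : 1 ≤ n) (hr : 1 ≤ r)
    (u : Fin n → A → ℝ) (util : Fin r → A → ℝ)
    (vbar : ℕ → A → ℝ)
    (hv_nonneg : ∀ t a, 0 ≤ vbar t a)
    (hv_sum : ∀ t, ∑ a, vbar t a = 1)
    (hrule : ∀ j, Tendsto (fun t => ∑ a, util j a * vbar t a) atTop (𝓝 0))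
    (ubar : Fin n → ℝ)
    (hu_lim : ∀ i, Tendsto (fun t => ∑ a, u i a * vbar t a) atTop (𝓝 (ubar i)))
    (α : Fin n → ℝ) (γ : ℝ) (y : Fin r → ℝ)
    (hcomb : (∑ i, α i • u i) + γ • (fun _ => (1 : ℝ)) = ∑ j, y j • util j)
    (hne : (∑ i, α i • u i) + γ • (fun _ => (1 : ℝ)) ≠ 0) :
    (¬ ((∀ i, α i = 0) ∧ γ = 0)) ∧ ∑ i, α i * ubar i + γ = 0 := by
  constructor
  · rintro ⟨hα, hγ⟩
    apply hne
    funext a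
    simp [hα, hγ, Finset.sum_apply]
  · set w : A → ℝ := (∑ i, α i • u i) + γ • (fun _ => (1 : ℝ)) with hw
    have hwa : ∀ a, w a = ∑ i, α i * u i a + γ := by
      intro a; simp [hw, Finset.sum_apply]
    -- f t := ⟨w, vbar t⟩
    have h1 : Tendsto (fun t => ∑ a, w a * vbar t a) atTop
        (𝓝 (∑ i, α i * ubar i + γ)) := by
      have : ∀ t, ∑ a, w a * vbar t a
          = ∑ i, α i * (∑ a, u i a * vbar t a) + γ * (∑ a, vbar t a) := by
        intro t
        simp only [hwa, add_mul, Finset.sum_add_distrib, ← Finset.mul_sum]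
        congr 1
        simp only [Finset.sum_mul, Finset.mul_sum, mul_assoc]
        exact Finset.sum_comm
      simp only [this]
      have := Tendsto.add
        (tendsto_finset_sum Finset.univ (fun i _ => (hu_lim i).const_mul (α i)))
        (tendsto_const_nhds (x := γ))
      simpa [hv_sum, mul_comm] using this.congr (by intro t; simp [hv_sum])
    have h2 : Tendsto (fun t => ∑ a, w a * vbar t a) atTop (𝓝 0) := by
      have : ∀ t, ∑ a, w a * vbar t a
          = ∑ j, y j * (∑ a, util j a * vbar t a) := by
        intro t
        have : ∀ a, w a = ∑ j, y j * util j a := by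
          intro a
          have := congrFun hcomb a
          simpa [Finset.sum_apply] using this
        simp only [this, Finset.sum_mul, Finset.mul_sum]
        rw [Finset.sum_comm]
        apply Finset.sum_congr rfl; intro j _
        apply Finset.sum_congr rfl; intro a _; ring
      simp only [this]
      have := tendsto_finset_sum (Finset.univ : Finset (Fin r))
        (fun j _ => (hrule j).const_mul (y j))
      simpa using this
    exact tendsto_nhds_unique h1 h2
end

section
/- Let A be a finite nonempty set and s, s^Rep : A → ℝ functions with values in [0,1]. Let (v_t)_{t∈ℕ} be a sequence of probability vectors on A satisfying ⟨s^Rep, v_{t+1}⟩ = ⟨s, v_t⟩ for all t ∈ ℕ. Let p : ℕ → ℝ be nonincreasing with 0 ≤ p_t ≤ 1 for all t, and suppose the partial sums Σ_{t=0}^{T−1} p_t tend to infinity as T → ∞. Then lim_{T→∞} (Σ_{t=0}^{T−1} p_t · ⟨s − s^Rep, v_t⟩) / (Σ_{t=0}^{T−1} p_t) = 0. (Abstract form of the paper's Theorem 3, first case: for a Markov strategy in a repeated game with infinite expected number of rounds, s − s^Rep is a ruling vector.) -/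
/-!
Write `g t = ⟨s^Rep, v_t⟩ ∈ [0, 1]`. The hypothesis turns `⟨s - s^Rep, v_t⟩` into the
telescoping increment `g (t+1) - g t`, so the numerator is a weighted telescoping sum.
Summation by parts against the nonincreasing nonnegative weights `p` bounds it by `p 0` in
absolute value, while the denominator tends to infinity.
-/

open Filter Finset Topology

lemma sum_mul_mem_Icc_of_sum_eq_one {A : Type*} [Fintype A] {f v : A → ℝ}
    (hf : ∀ a, f a ∈ Set.Icc (0 : ℝ) 1) (hv_nonneg : ∀ a, 0 ≤ v a)
    (hv_sum : ∑ a, v a = 1) :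
    ∑ a, f a * v a ∈ Set.Icc (0 : ℝ) 1 := by
  constructor
  · exact sum_nonneg fun a _ => mul_nonneg (hf a).1 (hv_nonneg a)
  · calc ∑ a, f a * v a ≤ ∑ a, v a :=
          sum_le_sum fun a _ => mul_le_of_le_one_left (hv_nonneg a) (hf a).2
      _ = 1 := hv_sum

section WeightedTelescoping

variable {p g : ℕ → ℝ}

/-- Abel summation: after removing the boundary term `p T * g T`, each step adds
`(p T - p (T+1)) * g (T+1)`, which lies between `0` and `p T - p (T+1)`. -/
lemma sum_range_mul_sub_sub_boundary_mem_Icc (hp : Antitone p)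
    (hg : ∀ t, g t ∈ Set.Icc (0 : ℝ) 1) (T : ℕ) :
    ∑ t ∈ range T, p t * (g (t + 1) - g t) - p T * g T + p 0 * g 0 ∈
      Set.Icc 0 (p 0 - p T) := by
  induction T with
  | zero => simp
  | succ T ih =>
    have hdrop : 0 ≤ p T - p (T + 1) := sub_nonneg.mpr (hp T.le_succ)
    have hstep_nonneg : 0 ≤ (p T - p (T + 1)) * g (T + 1) := mul_nonneg hdrop (hg _).1
    have hstep_le : (p T - p (T + 1)) * g (T + 1) ≤ p T - p (T + 1) :=
      mul_le_of_le_one_right hdrop (hg _).2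
    rw [sum_range_succ]
    constructor <;> linarith [ih.1, ih.2]

lemma abs_sum_range_mul_sub_le (hp : Antitone p) (hp_nonneg : ∀ t, 0 ≤ p t)
    (hg : ∀ t, g t ∈ Set.Icc (0 : ℝ) 1) (T : ℕ) :
    |∑ t ∈ range T, p t * (g (t + 1) - g t)| ≤ p 0 := by
  obtain ⟨hlow, hupp⟩ := sum_range_mul_sub_sub_boundary_mem_Icc hp hg T
  have hT : 0 ≤ p T * g T ∧ p T * g T ≤ p T :=
    ⟨mul_nonneg (hp_nonneg T) (hg T).1, mul_le_of_le_one_right (hp_nonneg T) (hg T).2⟩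
  have h0 : 0 ≤ p 0 * g 0 ∧ p 0 * g 0 ≤ p 0 :=
    ⟨mul_nonneg (hp_nonneg 0) (hg 0).1, mul_le_of_le_one_right (hp_nonneg 0) (hg 0).2⟩
  rw [abs_le]
  constructor <;> linarith [hT.1, hT.2, h0.1, h0.2]

end WeightedTelescoping

lemma tendsto_div_atTop_zero_of_abs_le {N S : ℕ → ℝ} {C : ℝ} (hN : ∀ T, |N T| ≤ C)
    (hS : Tendsto S atTop atTop) :
    Tendsto (fun T => N T / S T) atTop (𝓝 0) := by
  simp_rw [div_eq_inv_mul]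
  exact hS.inv_tendsto_atTop.zero_mul_isBoundedUnder_le (isBoundedUnder_of ⟨C, hN⟩)

theorem stmt3_general {A : Type*} [Fintype A]
    (s sRep : A → ℝ)
    (hsRep : ∀ a, sRep a ∈ Set.Icc (0 : ℝ) 1)
    (v : ℕ → A → ℝ)
    (hv_nonneg : ∀ t a, 0 ≤ v t a)
    (hv_sum : ∀ t, ∑ a, v t a = 1)
    (hstep : ∀ t, ∑ a, sRep a * v (t + 1) a = ∑ a, s a * v t a)
    (p : ℕ → ℝ)
    (hp_mono : Antitone p)
    (hp_mem : ∀ t, p t ∈ Set.Icc (0 : ℝ) 1)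
    (hp_div : Tendsto (fun T => ∑ t ∈ Finset.range T, p t) atTop atTop) :
    Tendsto
      (fun T => (∑ t ∈ Finset.range T, p t * (∑ a, (s a - sRep a) * v t a)) /
        (∑ t ∈ Finset.range T, p t)) atTop (𝓝 0) := by
  set g : ℕ → ℝ := fun t => ∑ a, sRep a * v t a
  have hg : ∀ t, g t ∈ Set.Icc (0 : ℝ) 1 := fun t =>
    sum_mul_mem_Icc_of_sum_eq_one hsRep (hv_nonneg t) (hv_sum t)
  have htelescope : ∀ t, ∑ a, (s a - sRep a) * v t a = g (t + 1) - g t := fun t => by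
    simp only [g, sub_mul, sum_sub_distrib, hstep t]
  simp only [htelescope]
  exact tendsto_div_atTop_zero_of_abs_le
    (abs_sum_range_mul_sub_le hp_mono (fun t => (hp_mem t).1) hg) hp_div

/-- Abstract form of the paper's Theorem 3, first case: in a repeated game with an
infinite expected number of rounds, `s - s^Rep` is a ruling vector for a Markov
strategy. -/
theorem stmt3 {A : Type*} [Fintype A] [Nonempty A]
    (s sRep : A → ℝ)
    (hs : ∀ a, s a ∈ Set.Icc (0 : ℝ) 1)
    (hsRep : ∀ a, sRep a ∈ Set.Icc (0 : ℝ) 1)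
    (v : ℕ → A → ℝ)
    (hv_nonneg : ∀ t a, 0 ≤ v t a)
    (hv_sum : ∀ t, ∑ a, v t a = 1)
    (hstep : ∀ t, ∑ a, sRep a * v (t + 1) a = ∑ a, s a * v t a)
    (p : ℕ → ℝ)
    (hp_mono : Antitone p)
    (hp_mem : ∀ t, p t ∈ Set.Icc (0 : ℝ) 1)
    (hp_div : Tendsto (fun T => ∑ t ∈ Finset.range T, p t) atTop atTop) :
    Tendsto
      (fun T => (∑ t ∈ Finset.range T, p t * (∑ a, (s a - sRep a) * v t a)) /
        (∑ t ∈ Finset.range T, p t)) atTop (𝓝 0) :=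
  stmt3_general s sRep hsRep v hv_nonneg hv_sum hstep p hp_mono hp_mem hp_div
end

section
/- Let A be a finite nonempty set, δ ∈ [0,1), and s, s^Rep : A → ℝ functions with values in [0,1]. Let (v_t)_{t∈ℕ} be a sequence of probability vectors on A satisfying ⟨s^Rep, v_{t+1}⟩ = ⟨s, v_t⟩ for all t ∈ ℕ, and set s_0 = ⟨s^Rep, v_0⟩. Then lim_{T→∞} (Σ_{t=0}^{T−1} δ^t · ⟨δ·s + (1−δ)·s_0·𝟙 − s^Rep, v_t⟩) / (Σ_{t=0}^{T−1} δ^t) = 0, where 𝟙 : A → ℝ is the constant function 1. (Abstract form of the paper's Theorem 3, second case: for a Markov strategy in a δ-repeated game, δ·s + (1−δ)·s_{0}·𝟙 − s^Rep is a ruling vector.) -/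
/-!
Write `x t = ⟨s^Rep, v_t⟩`. The step condition turns the inner product in round `t` into
`δ x_{t+1} + (1 - δ) x_0 - x_t`, so the discounted numerator telescopes to `δ^T (x_T - x_0)`.
Since `x` is bounded, this tends to `0`, while the denominator tends to `(1 - δ)⁻¹ ≠ 0`.
-/

open Filter Finset Topology

theorem geom_weighted_sum_telescope {R : Type*} [CommRing R] (δ : R) (x : ℕ → R) (T : ℕ) :
    ∑ t ∈ range T, δ ^ t * (δ * x (t + 1) + (1 - δ) * x 0 - x t) = δ ^ T * (x T - x 0) :=
  calc ∑ t ∈ range T, δ ^ t * (δ * x (t + 1) + (1 - δ) * x 0 - x t)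
      = ∑ t ∈ range T, (δ ^ (t + 1) * x (t + 1) - δ ^ t * x t)
          + x 0 * ((1 - δ) * ∑ t ∈ range T, δ ^ t) := by
        rw [mul_sum, mul_sum, ← sum_add_distrib]
        exact sum_congr rfl fun t _ => by ring
    _ = δ ^ T * (x T - x 0) := by
        rw [sum_range_sub (fun t => δ ^ t * x t), mul_neg_geom_sum]
        ring

theorem tendsto_pow_mul_div_geom_sum_zero {δ : ℝ} (hδ : |δ| < 1) {y : ℕ → ℝ} {C : ℝ}
    (hy : ∀ T, |y T| ≤ C) :
    Tendsto (fun T => δ ^ T * y T / ∑ t ∈ range T, δ ^ t) atTop (𝓝 0) := by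
  have hnum : Tendsto (fun T => δ ^ T * y T) atTop (𝓝 0) :=
    (tendsto_pow_atTop_nhds_zero_of_abs_lt_one hδ).zero_mul_isBoundedUnder_le
      (isBoundedUnder_of ⟨C, hy⟩)
  have hden : Tendsto (fun T => ∑ t ∈ range T, δ ^ t) atTop (𝓝 (1 - δ)⁻¹) :=
    (hasSum_geometric_of_abs_lt_one hδ).tendsto_sum_nat
  have hδ1 : 1 - δ ≠ 0 := sub_ne_zero.2 (abs_lt.1 hδ).2.ne'
  simpa only [zero_div, Pi.div_def] using hnum.div hden (inv_ne_zero hδ1)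

theorem abs_sum_mul_le_sum_abs_of_sum_eq_one {A : Type*} [Fintype A] (c v : A → ℝ)
    (hv_nonneg : ∀ a, 0 ≤ v a) (hv_sum : ∑ a, v a = 1) :
    |∑ a, c a * v a| ≤ ∑ a, |c a| := by
  refine (abs_sum_le_sum_abs _ _).trans (sum_le_sum fun a _ => ?_)
  have hva : v a ≤ 1 := hv_sum ▸ single_le_sum (fun b _ => hv_nonneg b) (mem_univ a)
  rw [abs_mul, abs_of_nonneg (hv_nonneg a)]
  exact mul_le_of_le_one_right (abs_nonneg _) hva

theorem sum_affine_mul_of_sum_eq_one {A : Type*} [Fintype A] (δ c : ℝ) (s r v : A → ℝ)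
    (hv_sum : ∑ a, v a = 1) :
    ∑ a, (δ * s a + c * 1 - r a) * v a = δ * ∑ a, s a * v a + c - ∑ a, r a * v a := by
  simp only [sub_mul, add_mul, sum_sub_distrib, sum_add_distrib, mul_assoc, ← mul_sum,
    hv_sum, mul_one]

theorem stmt4_general {A : Type*} [Fintype A]
    (δ : ℝ) (hδ : δ ∈ Set.Ico (0 : ℝ) 1)
    (s sRep : A → ℝ)
    (v : ℕ → A → ℝ)
    (hv_nonneg : ∀ t a, 0 ≤ v t a)
    (hv_sum : ∀ t, ∑ a, v t a = 1)
    (hstep : ∀ t, ∑ a, sRep a * v (t + 1) a = ∑ a, s a * v t a)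
    (s₀ : ℝ) (hs₀ : s₀ = ∑ a, sRep a * v 0 a) :
    Tendsto
      (fun T =>
        (∑ t ∈ Finset.range T,
          δ ^ t * (∑ a, (δ * s a + (1 - δ) * s₀ * 1 - sRep a) * v t a)) /
        (∑ t ∈ Finset.range T, δ ^ t)) atTop (𝓝 0) := by
  set x : ℕ → ℝ := fun t => ∑ a, sRep a * v t a
  have hnum : ∀ T, ∑ t ∈ range T,
      δ ^ t * ∑ a, (δ * s a + (1 - δ) * s₀ * 1 - sRep a) * v t a = δ ^ T * (x T - x 0) := by
    intro T
    rw [← geom_weighted_sum_telescope]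
    refine sum_congr rfl fun t _ => ?_
    rw [sum_affine_mul_of_sum_eq_one _ _ _ _ _ (hv_sum t), ← hstep, hs₀]
  have hx : ∀ t, |x t| ≤ ∑ a, |sRep a| := fun t =>
    abs_sum_mul_le_sum_abs_of_sum_eq_one _ _ (hv_nonneg t) (hv_sum t)
  simp_rw [hnum]
  refine tendsto_pow_mul_div_geom_sum_zero (abs_lt.2 ⟨by linarith [hδ.1], hδ.2⟩)
    (C := 2 * ∑ a, |sRep a|) fun T => ?_
  linarith [abs_sub (x T) (x 0), hx T, hx 0]

/-- Abstract form of the paper's Theorem 3, second case: in a `δ`-repeated game,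
`δ • s + (1 - δ) • s₀ • 𝟙 - s^Rep` is a ruling vector for a Markov strategy. -/
theorem stmt4 {A : Type*} [Fintype A] [Nonempty A]
    (δ : ℝ) (hδ : δ ∈ Set.Ico (0 : ℝ) 1)
    (s sRep : A → ℝ)
    (hs : ∀ a, s a ∈ Set.Icc (0 : ℝ) 1)
    (hsRep : ∀ a, sRep a ∈ Set.Icc (0 : ℝ) 1)
    (v : ℕ → A → ℝ)
    (hv_nonneg : ∀ t a, 0 ≤ v t a)
    (hv_sum : ∀ t, ∑ a, v t a = 1)
    (hstep : ∀ t, ∑ a, sRep a * v (t + 1) a = ∑ a, s a * v t a)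
    (s₀ : ℝ) (hs₀ : s₀ = ∑ a, sRep a * v 0 a) :
    Tendsto
      (fun T =>
        (∑ t ∈ Finset.range T,
          δ ^ t * (∑ a, (δ * s a + (1 - δ) * s₀ * 1 - sRep a) * v t a)) /
        (∑ t ∈ Finset.range T, δ ^ t)) atTop (𝓝 0) :=
  stmt4_general δ hδ s sRep v hv_nonneg hv_sum hstep s₀ hs₀
end

section
/- Let p : ℕ → ℝ be nonincreasing with 0 ≤ p_t ≤ 1 for all t, and suppose the partial sums Σ_{t=0}^{T−1} p_t tend to infinity as T → ∞. Let P : ℕ → ℝ satisfy 0 ≤ P_t ≤ 1 for all t. Then lim_{T→∞} (Σ_{t=0}^{T−1} p_t · (P_{t+1} − P_t)) / (Σ_{t=0}^{T−1} p_t) = 0. (Analytic core of the paper's Theorems 3 and 4 in the case of infinite expected number of rounds.) -/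
open Filter Finset Topology

lemma abel_id (p P : ℕ → ℝ) (T : ℕ) :
    ∑ t ∈ Finset.range T, p t * (P (t + 1) - P t)
      = p T * P T - p 0 * P 0 + ∑ t ∈ Finset.range T, (p t - p (t + 1)) * P (t + 1) := by
  induction T with
  | zero => simp
  | succ n ih => rw [Finset.sum_range_succ, Finset.sum_range_succ, ih]; ring

/-- Analytic core of the paper's Theorems 3 and 4 in the case of an infinite
expected number of rounds. -/
theorem stmt7 (p P : ℕ → ℝ)
    (hp_mono : Antitone p)
    (hp_mem : ∀ t, p t ∈ Set.Icc (0 : ℝ) 1)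
    (hp_div : Tendsto (fun T => ∑ t ∈ Finset.range T, p t) atTop atTop)
    (hP : ∀ t, P t ∈ Set.Icc (0 : ℝ) 1) :
    Tendsto
      (fun T => (∑ t ∈ Finset.range T, p t * (P (t + 1) - P t)) /
        (∑ t ∈ Finset.range T, p t)) atTop (𝓝 0) := by
  have hnum : ∀ T, |∑ t ∈ Finset.range T, p t * (P (t + 1) - P t)| ≤ 3 := by
    intro T
    rw [abel_id]
    have key : ∀ a b : ℝ, a ∈ Set.Icc (0:ℝ) 1 → b ∈ Set.Icc (0:ℝ) 1 → |a * b| ≤ 1 := by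
      intro a b ha hb
      rw [abs_le]
      constructor <;> nlinarith [ha.1, ha.2, hb.1, hb.2]
    have h1 : |p T * P T| ≤ 1 := key _ _ (hp_mem T) (hP T)
    have h2 : |p 0 * P 0| ≤ 1 := key _ _ (hp_mem 0) (hP 0)
    have h3 : |∑ t ∈ Finset.range T, (p t - p (t + 1)) * P (t + 1)| ≤ 1 := by
      calc |∑ t ∈ Finset.range T, (p t - p (t + 1)) * P (t + 1)|
          ≤ ∑ t ∈ Finset.range T, |(p t - p (t + 1)) * P (t + 1)| :=
            Finset.abs_sum_le_sum_abs _ _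
        _ ≤ ∑ t ∈ Finset.range T, (p t - p (t + 1)) := by
            apply Finset.sum_le_sum
            intro t _
            rw [abs_mul]
            have hpt : p (t + 1) ≤ p t := hp_mono (Nat.le_succ t)
            have hPt := hP (t + 1)
            have : |P (t + 1)| ≤ 1 := by rw [abs_le]; exact ⟨by linarith [hPt.1], hPt.2⟩
            calc |p t - p (t + 1)| * |P (t + 1)| ≤ |p t - p (t + 1)| * 1 := by
                  exact mul_le_mul_of_nonneg_left this (abs_nonneg _)
              _ = p t - p (t + 1) := by rw [mul_one, abs_of_nonneg (by linarith)]
        _ = p 0 - p T := by rw [Finset.sum_range_sub' p T]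
        _ ≤ 1 := by have := (hp_mem 0).2; have := (hp_mem T).1; linarith
    calc |p T * P T - p 0 * P 0 + ∑ t ∈ Finset.range T, (p t - p (t + 1)) * P (t + 1)|
        ≤ |p T * P T - p 0 * P 0| + |∑ t ∈ Finset.range T, (p t - p (t + 1)) * P (t + 1)| :=
          abs_add_le _ _
      _ ≤ (|p T * P T| + |p 0 * P 0|) + 1 := by
          gcongr; exact abs_sub _ _
      _ ≤ 3 := by linarith
  have hg : Tendsto (fun T => 3 / ∑ t ∈ Finset.range T, p t) atTop (𝓝 0) :=
    tendsto_const_nhds.div_atTop hp_div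
  refine squeeze_zero_norm' ?_ hg
  filter_upwards [hp_div.eventually_ge_atTop 1] with T hT
  simp only [Real.norm_eq_abs, abs_div]
  rw [abs_of_nonneg (by linarith : (0:ℝ) ≤ ∑ t ∈ Finset.range T, p t)]
  have hd : (0:ℝ) < ∑ t ∈ Finset.range T, p t := by linarith
  gcongr
  exact hnum T
end

section
/- For all real numbers α, γ, y and all p_0, p_1, …, p_7 ∈ [0,1], if the eight equations 3α + γ = y·(p_0 − 1), 4α + γ = y·(p_1 − 1), α + γ = y·(p_2 − 1), 2α + γ = y·(p_3 − 1), α + γ = y·p_4, 2α + γ = y·p_5, −α + γ = y·p_6, and γ = y·p_7 all hold, then α = 0 and γ = 0. (The paper's claim in Example 2: in the three-player repeated public goods game with cost 3 and multiplication factor 2, a single player cannot unilaterally pin another player's payoff — the only linear relation α·ū_3 + γ = 0 enforceable by one player's Markov strategy is the trivial one.) -/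
/-- The paper's claim in Example 2: in the three-player repeated public goods game
with cost 3 and multiplication factor 2, a single player cannot unilaterally pin
another player's payoff — the only linear relation `α·ū₃ + γ = 0` enforceable by
one player's Markov strategy is the trivial one. -/
theorem stmt15 (α γ y p0 p1 p2 p3 p4 p5 p6 p7 : ℝ)
    (h0 : p0 ∈ Set.Icc (0 : ℝ) 1) (h1 : p1 ∈ Set.Icc (0 : ℝ) 1)
    (h2 : p2 ∈ Set.Icc (0 : ℝ) 1) (h3 : p3 ∈ Set.Icc (0 : ℝ) 1)
    (h4 : p4 ∈ Set.Icc (0 : ℝ) 1) (h5 : p5 ∈ Set.Icc (0 : ℝ) 1)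
    (h6 : p6 ∈ Set.Icc (0 : ℝ) 1) (h7 : p7 ∈ Set.Icc (0 : ℝ) 1)
    (e0 : 3 * α + γ = y * (p0 - 1))
    (e1 : 4 * α + γ = y * (p1 - 1))
    (e2 : α + γ = y * (p2 - 1))
    (e3 : 2 * α + γ = y * (p3 - 1))
    (e4 : α + γ = y * p4)
    (e5 : 2 * α + γ = y * p5)
    (e6 : -α + γ = y * p6)
    (e7 : γ = y * p7) :
    α = 0 ∧ γ = 0 := by
  by_cases hy : y = 0
  · subst hy
    constructor <;> linarith
  · have hA : p2 - 1 = p4 := mul_left_cancel₀ hy (by linarith)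
    have hB : p3 - 1 = p5 := mul_left_cancel₀ hy (by linarith)
    have hp4 : p4 = 0 := le_antisymm (by linarith [h2.2]) h4.1
    have hp5 : p5 = 0 := le_antisymm (by linarith [h3.2]) h5.1
    have k4 : α + γ = 0 := by rw [hp4] at e4; linarith
    have k5 : 2 * α + γ = 0 := by rw [hp5] at e5; linarith
    constructor <;> linarith
end
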